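/- Synchronous incremental voting on K_n with three consecutive opinions: suppose X_v(0) ∈ {1,2,3} for all v. Then for every t ≥ 0, E[N₁(t+1)·N₃(t+1) | X(t)] ≤ (1 − (N₁(t)+N₃(t))/(2n))·N₁(t)·N₃(t). -/

import Mathlib

/-!
After one step, `N₁' = ∑ᵥ [xᵥ ≠ 3]·[x_{c v} = 1]` and `N₃' = ∑_w [x_w ≠ 1]·[x_{c w} = 3]`, where
the choices `c v` are independent and uniform. No vertex can end at both `1` and `3`, so the
diagonal terms of `N₁'·N₃'` vanish and independence of distinct coordinates gives
`E[N₁'·N₃'] ≤ E[N₁']·E[N₃'] = N₁(n - N₃)·N₃(n - N₁)/n²`. Finally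
`(n - N₁)(n - N₃) ≤ n² - n(N₁ + N₃)/2`, because `N₁N₃ ≤ n(N₁ + N₃)/2` when `N₁, N₃ ≤ n`.
-/

open Finset Fintype

namespace KnSync12

/-- The incremental voting update rule. -/
def updateRule (a b : ℤ) : ℤ := if a < b then a + 1 else if b < a then a - 1 else a

/-- Expected value of a real-valued function under a probability mass function. -/
noncomputable def expVal {α : Type*} (p : PMF α) (f : α → ℝ) : ℝ :=
  ∑' a, (p a).toReal * f a

/-- One step of synchronous incremental voting on `K_n`. -/
noncomputable def step (n : ℕ) [NeZero n] (x : Fin n → ℤ) : PMF (Fin n → ℤ) :=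
  (PMF.uniformOfFintype (Fin n → Fin n)).map fun c => fun v => updateRule (x v) (x (c v))

/-- `count n i x` is `N_i`: the number of vertices holding opinion `i`. -/
def count (n : ℕ) (i : ℤ) (x : Fin n → ℤ) : ℕ :=
  (Finset.univ.filter fun v => x v = i).card

end KnSync12

section

variable {α β R : Type*} [Fintype α] [DecidableEq α] [Fintype β] [CommSemiring R]

theorem sum_pi_apply_mul_apply (φ ψ : β → R) {v w : α} (hvw : v ≠ w) :
    (card β : R) ^ 2 * ∑ c : α → β, φ (c v) * ψ (c w) =
      (card β : R) ^ card α * ((∑ b, φ b) * ∑ b, ψ b) := by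
  have : Nontrivial α := nontrivial_of_ne v w hvw
  have hcard : 2 + (card {j // j ≠ w} - 1) = card α := by
    have := Fintype.one_lt_card (α := α)
    rw [card_subtype_compl, card_subtype_eq]; omega
  have hsplit : ∑ c : α → β, φ (c v) * ψ (c w) =
      ∑ b, ∑ c : {j // j ≠ w} → β, φ (c ⟨v, hvw⟩) * ψ b := by
    rw [← Fintype.sum_prod_type', ← (Equiv.funSplitAt w β).sum_comp]
    simp
  have hcoord := sum_piFinset_apply φ (univ : Finset β) (⟨v, hvw⟩ : {j // j ≠ w})
  rw [piFinset_univ, card_univ, nsmul_eq_mul] at hcoord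
  rw [hsplit]
  simp_rw [← Finset.sum_mul, ← Finset.mul_sum, hcoord, ← hcard]
  push_cast
  ring

theorem sum_pi_sum_apply_mul_sum_apply (F G : α → β → R) (hFG : ∀ u b, F u b * G u b = 0) :
    (card β : R) ^ 2 * ∑ c : α → β, (∑ v, F v (c v)) * ∑ w, G w (c w) =
      (card β : R) ^ card α * ∑ v, ∑ w ∈ univ.erase v, (∑ b, F v b) * ∑ b, G w b := by
  have hdiag : ∀ v, ∑ c : α → β, F v (c v) * G v (c v) = 0 := fun v => by simp [hFG]
  conv_lhs => simp only [Finset.sum_mul_sum]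
  rw [sum_comm, mul_sum, mul_sum]
  refine sum_congr rfl fun v _ => ?_
  rw [sum_comm, ← sum_erase univ (f := fun w => ∑ c : α → β, F v (c v) * G w (c w)) (hdiag v),
    mul_sum, mul_sum]
  refine sum_congr rfl fun w hw => ?_
  rw [sum_pi_apply_mul_apply _ _ (ne_of_mem_erase hw).symm]

theorem sum_sum_erase_mul_le_sum_mul_sum {ι S : Type*} [Fintype ι] [DecidableEq ι]
    [Semiring S] [PartialOrder S] [IsOrderedRing S] {f g : ι → S} (hf : ∀ i, 0 ≤ f i)
    (hg : ∀ i, 0 ≤ g i) :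
    ∑ v, ∑ w ∈ univ.erase v, f v * g w ≤ (∑ v, f v) * ∑ w, g w := by
  rw [Finset.sum_mul_sum]
  exact sum_le_sum fun v _ =>
    sum_le_sum_of_subset_of_nonneg (erase_subset _ _) fun w _ _ => mul_nonneg (hf v) (hg w)

theorem sub_mul_sub_le {n a c : ℝ} (ha : 0 ≤ a) (hc : 0 ≤ c) (han : a ≤ n) (hcn : c ≤ n) :
    (n - a) * (n - c) ≤ n ^ 2 - n * (a + c) / 2 := by
  nlinarith [mul_le_mul_of_nonneg_left hcn ha, mul_le_mul_of_nonneg_left han hc]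

end

namespace KnSync12

lemma expVal_map {α β : Type*} [Fintype α] (p : PMF α) (g : α → β) (f : β → ℝ) :
    expVal (p.map g) f = ∑ a, (p a).toReal * f (g a) := by
  classical
  calc ∑' b, ((p.map g) b).toReal * f b
      = ∑' b, ∑ a, if b = g a then (p a).toReal * f (g a) else 0 := by
        refine tsum_congr fun b => ?_
        rw [PMF.map_apply, tsum_fintype,
          ENNReal.toReal_sum fun a _ => by split <;> simp [PMF.apply_ne_top], sum_mul]
        refine sum_congr rfl fun a _ => ?_
        split_ifs with h <;> simp [h]
    _ = ∑ a, ∑' b, if b = g a then (p a).toReal * f (g a) else 0 :=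
        Summable.tsum_finsetSum fun a _ => ⟨_, hasSum_ite_eq (g a) _⟩
    _ = ∑ a, (p a).toReal * f (g a) := sum_congr rfl fun a _ => tsum_ite_eq (g a) _

lemma cast_count_eq_sum_boole {R : Type*} [Semiring R] (n : ℕ) (i : ℤ) (x : Fin n → ℤ) :
    (count n i x : R) = ∑ v, if x v = i then 1 else 0 := by
  simp [count]

lemma count_le (n : ℕ) (i : ℤ) (x : Fin n → ℤ) : count n i x ≤ n :=
  (card_filter_le _ _).trans_eq (Finset.card_fin n)

lemma sum_boole_ne_eq_sub_count {R : Type*} [Ring R] (n : ℕ) (i : ℤ) (x : Fin n → ℤ) :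
    ∑ v, (if x v ≠ i then 1 else 0 : R) = n - count n i x := by
  rw [cast_count_eq_sum_boole, eq_sub_iff_add_eq, ← sum_add_distrib]
  have hterm : ∀ v, (if x v ≠ i then 1 else 0 : R) + (if x v = i then 1 else 0) = 1 :=
    fun v => by by_cases h : x v = i <;> simp [h]
  rw [sum_congr rfl fun v _ => hterm v]
  simp

lemma updateRule_eq_one_iff {a b : ℤ} (ha : a ∈ ({1, 2, 3} : Set ℤ))
    (hb : b ∈ ({1, 2, 3} : Set ℤ)) : updateRule a b = 1 ↔ a ≠ 3 ∧ b = 1 := by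
  rcases ha with rfl | rfl | rfl <;> rcases hb with rfl | rfl | rfl <;> decide

lemma updateRule_eq_three_iff {a b : ℤ} (ha : a ∈ ({1, 2, 3} : Set ℤ))
    (hb : b ∈ ({1, 2, 3} : Set ℤ)) : updateRule a b = 3 ↔ a ≠ 1 ∧ b = 3 := by
  rcases ha with rfl | rfl | rfl <;> rcases hb with rfl | rfl | rfl <;> decide

section Step

variable {n : ℕ} {x : Fin n → ℤ}

lemma cast_count_one_update (hx : ∀ v, x v ∈ ({1, 2, 3} : Set ℤ)) (c : Fin n → Fin n) :
    (count n 1 (fun v => updateRule (x v) (x (c v))) : ℝ) =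
      ∑ v, (if x v ≠ 3 then 1 else 0) * (if x (c v) = 1 then 1 else 0) := by
  simp only [cast_count_eq_sum_boole, ite_zero_mul_ite_zero, mul_one,
    updateRule_eq_one_iff (hx _) (hx _)]

lemma cast_count_three_update (hx : ∀ v, x v ∈ ({1, 2, 3} : Set ℤ)) (c : Fin n → Fin n) :
    (count n 3 (fun v => updateRule (x v) (x (c v))) : ℝ) =
      ∑ v, (if x v ≠ 1 then 1 else 0) * (if x (c v) = 3 then 1 else 0) := by
  simp only [cast_count_eq_sum_boole, ite_zero_mul_ite_zero, mul_one,
    updateRule_eq_three_iff (hx _) (hx _)]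

lemma sq_mul_expVal_step_count_one_mul_count_three [NeZero n]
    (hx : ∀ v, x v ∈ ({1, 2, 3} : Set ℤ)) :
    (n : ℝ) ^ 2 * expVal (step n x) (fun y => (count n 1 y : ℝ) * count n 3 y) =
      ∑ v, ∑ w ∈ univ.erase v, ((if x v ≠ 3 then 1 else 0) * (count n 1 x : ℝ)) *
        ((if x w ≠ 1 then 1 else 0) * (count n 3 x : ℝ)) := by
  have hdisjoint : ∀ (v b : Fin n),
      ((if x v ≠ 3 then 1 else 0) * (if x b = 1 then 1 else 0) : ℝ) *
        ((if x v ≠ 1 then 1 else 0) * (if x b = 3 then 1 else 0)) = 0 := by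
    intro v b
    by_cases h : x b = 1 <;> simp [h]
  have hcard : (n : ℝ) = card (Fin n) := by simp
  rw [step, expVal_map, hcard]
  conv_lhs => simp only [PMF.uniformOfFintype_apply, ENNReal.toReal_inv, ENNReal.toReal_natCast,
    ENNReal.toReal_pow, card_fun, Nat.cast_pow, ← mul_sum, cast_count_one_update hx,
    cast_count_three_update hx]
  rw [mul_left_comm, sum_pi_sum_apply_mul_sum_apply _ _ hdisjoint, inv_mul_cancel_left₀ (by simp)]
  refine sum_congr rfl fun v _ => sum_congr rfl fun w _ => ?_
  rw [← mul_sum, ← mul_sum, ← cast_count_eq_sum_boole, ← cast_count_eq_sum_boole]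

end Step

/-- **Drift of `N₁·N₃` for synchronous incremental voting on `K_n` with opinions in
`{1,2,3}`**: `E[N₁'·N₃' | X] ≤ (1 − (N₁+N₃)/(2n))·N₁·N₃`. -/
theorem product_drift_three_opinions
    (n : ℕ) [NeZero n] (x : Fin n → ℤ) (hx : ∀ v, x v ∈ ({1, 2, 3} : Set ℤ)) :
    expVal (step n x) (fun y => (count n 1 y : ℝ) * (count n 3 y : ℝ)) ≤
      (1 - ((count n 1 x : ℝ) + (count n 3 x : ℝ)) / (2 * n)) *
        ((count n 1 x : ℝ) * (count n 3 x : ℝ)) := by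
  set A : ℝ := (count n 1 x : ℝ)
  set C : ℝ := (count n 3 x : ℝ)
  have hn : (0 : ℝ) < n := by exact_mod_cast NeZero.pos n
  have hA : A ≤ n := Nat.cast_le.2 (count_le n 1 x)
  have hC : C ≤ n := Nat.cast_le.2 (count_le n 3 x)
  refine le_of_mul_le_mul_left ?_ (by positivity : (0 : ℝ) < n ^ 2)
  calc (n : ℝ) ^ 2 * expVal (step n x) (fun y => (count n 1 y : ℝ) * count n 3 y)
      ≤ (∑ v, (if x v ≠ 3 then 1 else 0) * A) * ∑ w, (if x w ≠ 1 then 1 else 0) * C := by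
        rw [sq_mul_expVal_step_count_one_mul_count_three hx]
        exact sum_sum_erase_mul_le_sum_mul_sum (fun _ => by positivity) (fun _ => by positivity)
    _ = (n - A) * (n - C) * (A * C) := by
        rw [← sum_mul, ← sum_mul, sum_boole_ne_eq_sub_count, sum_boole_ne_eq_sub_count]; ring
    _ ≤ (n ^ 2 - n * (A + C) / 2) * (A * C) :=
        mul_le_mul_of_nonneg_right (sub_mul_sub_le (by positivity) (by positivity) hA hC)
          (by positivity)
    _ = n ^ 2 * ((1 - (A + C) / (2 * n)) * (A * C)) := by field_simp

end KnSync12
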